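/- Let a_0 = 0 and a_n = 1 − e^{−16^{n+1}} for n ≥ 1. For 1 ≤ p ≤ ∞ and f ∈ L_p(Ω), define G^T(f) = (∫₀^∞ |Σ_{n≥2} t·16^n e^{−16^n t} dE_n(f)|² dt/t)^{1/2} and S(f − E_1(f)) = (Σ_{n≥2} |dE_n(f)|²)^{1/2}. Then √(7/60) · ‖S(f − E_1(f))‖_{L_p(Ω)} ≤ ‖G^T(f)‖_{L_p(Ω)} ≤ √(23/60) · ‖S(f − E_1(f))‖_{L_p(Ω)}. -/

import Mathlib

/-!
Write `b_n = 16^{n+2}` and `d_n = dE_{n+2}(f)(ω)`. Then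
`G^T(f)(ω)² = ∫₀^∞ t (Σ_n b_n e^{-b_n t} d_n)² dt`, and since
`∫₀^∞ t · b_m e^{-b_m t} · b_n e^{-b_n t} dt = b_m b_n / (b_m + b_n)²`, this is the quadratic form
of a Gram matrix which equals `1/4` on the diagonal and is at most `16^{-|m-n|}` off it. By Schur's
test the off-diagonal part has norm at most `2 · (1/16) / (1 - 1/16) = 2/15`, so the form lies
between `(1/4 - 2/15) Σ d_n² = 7/60 Σ d_n²` and `23/60 Σ d_n²` for finitely supported `d`.
Fatou's lemma gives the upper bound for the full series. For the lower bound, the cross term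
between the first `M` differences and the tail is bounded by `sup |d| · sup_{n ≥ M} |d_n|` times
a constant (again by the geometric decay of the kernel), and `d_n → 0` almost surely by martingale
convergence. Both bounds hold pointwise in `ω`, hence for every `L_p` norm.
-/
open MeasureTheory Filter Set Topology ENNReal

/-- `E_n(f)`: conditional expectation of `f` given `𝒜_n` for `n ≥ 1`, with `E_0 = 0`. -/
noncomputable def condE {Ω : Type*} [m0 : MeasurableSpace Ω] (μ : Measure Ω)
    (F : ℕ → MeasurableSpace Ω) (f : Ω → ℝ) (n : ℕ) : Ω → ℝ :=
  if n = 0 then 0 else μ[f | F n]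

/-- The martingale difference `dE_n(f) = E_n(f) - E_{n-1}(f)`. -/
noncomputable def dE {Ω : Type*} [m0 : MeasurableSpace Ω] (μ : Measure Ω)
    (F : ℕ → MeasurableSpace Ω) (f : Ω → ℝ) (n : ℕ) : Ω → ℝ :=
  fun ω => condE μ F f n ω - condE μ F f (n - 1) ω

/-- The `g`-function `G^T(f)` of the semigroup associated with `a_n = 1 - e^{-16^{n+1}}`,
`G^T(f)(ω) = (∫₀^∞ |Σ_{n≥2} t·16ⁿ e^{-16ⁿ t} dE_n(f)(ω)|² dt/t)^{1/2}`,
taking values in `ℝ≥0∞`. -/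
noncomputable def GT {Ω : Type*} [m0 : MeasurableSpace Ω] (μ : Measure Ω)
    (F : ℕ → MeasurableSpace Ω) (f : Ω → ℝ) : Ω → ℝ≥0∞ :=
  fun ω => (∫⁻ t in Ioi (0 : ℝ), ENNReal.ofReal
    ((∑' n : ℕ, t * 16 ^ (n + 2) * Real.exp (-(16 ^ (n + 2) * t)) * dE μ F f (n + 2) ω) ^ 2 / t))
      ^ (1 / 2 : ℝ)

/-- The martingale square function `S(f - E_1(f))(ω) = (Σ_{n≥2} |dE_n(f)(ω)|²)^{1/2}`,
taking values in `ℝ≥0∞`. -/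
noncomputable def Ssq {Ω : Type*} [m0 : MeasurableSpace Ω] (μ : Measure Ω)
    (F : ℕ → MeasurableSpace Ω) (f : Ω → ℝ) : Ω → ℝ≥0∞ :=
  fun ω => (∑' n : ℕ, ENNReal.ofReal ((dE μ F f (n + 2) ω) ^ 2)) ^ (1 / 2 : ℝ)

/-- The `L_p(Ω)`-norm (`1 ≤ p ≤ ∞`) of an `ℝ≥0∞`-valued function. -/
noncomputable def lpNormE {Ω : Type*} [MeasurableSpace Ω] (μ : Measure Ω) (p : ℝ≥0∞)
    (h : Ω → ℝ≥0∞) : ℝ≥0∞ :=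
  if p = ∞ then essSup h μ else (∫⁻ ω, h ω ^ p.toReal ∂μ) ^ (1 / p.toReal)

namespace GFunction

noncomputable def expKernel (a t : ℝ) : ℝ := a * Real.exp (-(a * t))

lemma expKernel_nonneg {a : ℝ} (ha : 0 ≤ a) (t : ℝ) : 0 ≤ expKernel a t :=
  mul_nonneg ha (Real.exp_pos _).le

lemma mul_expKernel_mul_expKernel (a b t : ℝ) :
    t * (expKernel a t * expKernel b t) = a * b * (t * Real.exp (-((a + b) * t))) := by
  rw [expKernel, expKernel, show -((a + b) * t) = -(a * t) + -(b * t) by ring, Real.exp_add]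
  ring

lemma integrableOn_mul_exp_neg_mul {a : ℝ} (ha : 0 < a) :
    IntegrableOn (fun t : ℝ => t * Real.exp (-(a * t))) (Ioi 0) := by
  simpa using integrableOn_rpow_mul_exp_neg_mul_rpow (p := 1) (s := 1) (by norm_num) one_pos ha

lemma integral_mul_exp_neg_mul {a : ℝ} (ha : 0 < a) :
    ∫ t in Ioi (0 : ℝ), t * Real.exp (-(a * t)) = 1 / a ^ 2 := by
  have h := Real.integral_rpow_mul_exp_neg_mul_Ioi two_pos ha
  norm_num [Real.Gamma_two] at h
  simpa using h

lemma integrableOn_mul_expKernel_mul_expKernel {a b : ℝ} (ha : 0 < a) (hb : 0 < b) :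
    IntegrableOn (fun t => t * (expKernel a t * expKernel b t)) (Ioi 0) := by
  simp_rw [mul_expKernel_mul_expKernel]
  exact (integrableOn_mul_exp_neg_mul (add_pos ha hb)).const_mul _

lemma integral_mul_expKernel_mul_expKernel {a b : ℝ} (ha : 0 < a) (hb : 0 < b) :
    ∫ t in Ioi (0 : ℝ), t * (expKernel a t * expKernel b t) = a * b / (a + b) ^ 2 := by
  simp_rw [mul_expKernel_mul_expKernel]
  rw [integral_const_mul, integral_mul_exp_neg_mul (add_pos ha hb), mul_one_div]

lemma lintegral_mul_expKernel_mul_expKernel {a b : ℝ} (ha : 0 < a) (hb : 0 < b) :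
    ∫⁻ t in Ioi (0 : ℝ), ENNReal.ofReal (t * (expKernel a t * expKernel b t)) =
      ENNReal.ofReal (a * b / (a + b) ^ 2) := by
  rw [← integral_mul_expKernel_mul_expKernel ha hb,
    ofReal_integral_eq_lintegral_ofReal (integrableOn_mul_expKernel_mul_expKernel ha hb)]
  filter_upwards [ae_restrict_mem measurableSet_Ioi] with t (ht : 0 < t)
  exact mul_nonneg ht.le (mul_nonneg (expKernel_nonneg ha.le t) (expKernel_nonneg hb.le t))

lemma lintegral_mul_sq_sum_expKernel {ι : Type*} {b : ι → ℝ} (hb : ∀ i, 0 < b i)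
    (s : Finset ι) (d : ι → ℝ) :
    ∫⁻ t in Ioi (0 : ℝ), ENNReal.ofReal (t * (∑ i ∈ s, expKernel (b i) t * d i) ^ 2) =
      ENNReal.ofReal (∑ i ∈ s, ∑ j ∈ s, b i * b j / (b i + b j) ^ 2 * d i * d j) := by
  have hexpand : ∀ t, t * (∑ i ∈ s, expKernel (b i) t * d i) ^ 2 =
      ∑ i ∈ s, ∑ j ∈ s, d i * d j * (t * (expKernel (b i) t * expKernel (b j) t)) := by
    intro t
    simp_rw [sq, Finset.sum_mul_sum, Finset.mul_sum]
    exact Finset.sum_congr rfl fun i _ => Finset.sum_congr rfl fun j _ => by ring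
  have hint : ∀ i j, IntegrableOn
      (fun t => d i * d j * (t * (expKernel (b i) t * expKernel (b j) t))) (Ioi 0) :=
    fun i j => (integrableOn_mul_expKernel_mul_expKernel (hb i) (hb j)).const_mul _
  simp_rw [hexpand]
  rw [← ofReal_integral_eq_lintegral_ofReal]
  · rw [integral_finsetSum _ fun i _ => integrable_finsetSum _ fun j _ => hint i j]
    refine congrArg _ (Finset.sum_congr rfl fun i _ => ?_)
    rw [integral_finsetSum _ fun j _ => hint i j]
    refine Finset.sum_congr rfl fun j _ => ?_
    rw [integral_const_mul, integral_mul_expKernel_mul_expKernel (hb i) (hb j)]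
    ring
  · exact integrable_finsetSum _ fun i _ => integrable_finsetSum _ fun j _ => hint i j
  · filter_upwards [ae_restrict_mem measurableSet_Ioi] with t (ht : 0 < t)
    simp only [Pi.zero_apply]
    rw [← hexpand]
    positivity

lemma lintegral_mul_tsum_mul_tsum {ι κ : Type*} [Countable ι] [Countable κ]
    {a : ι → ℝ} {b : κ → ℝ} (ha : ∀ i, 0 < a i) (hb : ∀ j, 0 < b j)
    (α : ι → ℝ≥0∞) (β : κ → ℝ≥0∞) :
    ∫⁻ t in Ioi (0 : ℝ), ENNReal.ofReal t *
        (∑' i, α i * ENNReal.ofReal (expKernel (a i) t)) *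
        (∑' j, β j * ENNReal.ofReal (expKernel (b j) t)) =
      ∑' i, ∑' j, α i * β j * ENNReal.ofReal (a i * b j / (a i + b j) ^ 2) := by
  have hexpand : ∀ t, 0 ≤ t → ENNReal.ofReal t *
        (∑' i, α i * ENNReal.ofReal (expKernel (a i) t)) *
        (∑' j, β j * ENNReal.ofReal (expKernel (b j) t)) =
      ∑' i, ∑' j, α i * β j *
        ENNReal.ofReal (t * (expKernel (a i) t * expKernel (b j) t)) := by
    intro t ht
    rw [← ENNReal.tsum_mul_left (a := ENNReal.ofReal t), ← ENNReal.tsum_mul_right]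
    refine tsum_congr fun i => ?_
    rw [← ENNReal.tsum_mul_left]
    refine tsum_congr fun j => ?_
    rw [ENNReal.ofReal_mul ht, ENNReal.ofReal_mul (expKernel_nonneg (ha i).le t)]
    ring
  have hmeas : ∀ i j, Measurable fun t =>
      α i * β j * ENNReal.ofReal (t * (expKernel (a i) t * expKernel (b j) t)) := by
    intro i j
    unfold expKernel
    fun_prop
  rw [setLIntegral_congr_fun measurableSet_Ioi fun t (ht : 0 < t) => hexpand t ht.le,
    lintegral_tsum fun i => (Measurable.tsum fun j => hmeas i j).aemeasurable]
  refine tsum_congr fun i => ?_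
  rw [lintegral_tsum fun j => (hmeas i j).aemeasurable]
  refine tsum_congr fun j => ?_
  rw [lintegral_const_mul _ (by unfold expKernel; fun_prop),
    lintegral_mul_expKernel_mul_expKernel (ha i) (hb j)]

lemma abs_sum_sum_mul_le {ι : Type*} (s : Finset ι) {K : ι → ι → ℝ}
    (hK : ∀ i j, 0 ≤ K i j) (hsymm : ∀ i j, K i j = K j i) {C : ℝ}
    (hC : ∀ i ∈ s, ∑ j ∈ s, K i j ≤ C) (d : ι → ℝ) :
    |∑ i ∈ s, ∑ j ∈ s, K i j * d i * d j| ≤ C * ∑ i ∈ s, d i ^ 2 := by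
  calc |∑ i ∈ s, ∑ j ∈ s, K i j * d i * d j|
      ≤ ∑ i ∈ s, ∑ j ∈ s, (K i j * d i ^ 2 + K j i * d j ^ 2) / 2 := by
        refine (Finset.abs_sum_le_sum_abs _ _).trans (Finset.sum_le_sum fun i _ =>
          (Finset.abs_sum_le_sum_abs _ _).trans (Finset.sum_le_sum fun j _ => ?_))
        rw [← hsymm i j, abs_mul, abs_mul, abs_of_nonneg (hK i j), ← sq_abs (d i),
          ← sq_abs (d j)]
        nlinarith [mul_nonneg (hK i j) (sq_nonneg (|d i| - |d j|))]
    _ = ∑ i ∈ s, ∑ j ∈ s, K i j * d i ^ 2 := by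
        simp_rw [add_div, Finset.sum_add_distrib]
        rw [Finset.sum_comm (f := fun i j => K j i * d j ^ 2 / 2)]
        simp_rw [← Finset.sum_add_distrib, add_halves]
    _ = ∑ i ∈ s, d i ^ 2 * ∑ j ∈ s, K i j := by
        simp_rw [Finset.mul_sum, mul_comm (d _ ^ 2)]
    _ ≤ ∑ i ∈ s, d i ^ 2 * C :=
        Finset.sum_le_sum fun i hi => mul_le_mul_of_nonneg_left (hC i hi) (sq_nonneg _)
    _ = C * ∑ i ∈ s, d i ^ 2 := by rw [Finset.mul_sum]; simp_rw [mul_comm C]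

lemma sum_pow_dist_le {r : ℝ} (hr0 : 0 ≤ r) (hr1 : r < 1) (m : ℕ) (s : Finset ℕ) :
    ∑ n ∈ s, r ^ Nat.dist m n ≤ (1 + r) / (1 - r) := by
  have hgeom := hasSum_geometric_of_lt_one hr0 hr1
  have hZ : HasSum (fun j : ℤ => r ^ j.natAbs) ((1 - r)⁻¹ + r * (1 - r)⁻¹) :=
    HasSum.of_nat_of_neg_add_one (by simpa using hgeom)
      ((hgeom.mul_left r).congr_fun fun n => by rw [← pow_succ']; congr 1)
  calc ∑ n ∈ s, r ^ Nat.dist m n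
      = ∑ j ∈ s.image (fun n : ℕ => (n : ℤ) - m), r ^ j.natAbs := by
        rw [Finset.sum_image fun _ _ _ _ h => by omega]
        refine Finset.sum_congr rfl fun n _ => congrArg _ ?_
        unfold Nat.dist
        omega
    _ ≤ (1 - r)⁻¹ + r * (1 - r)⁻¹ := sum_le_hasSum _ (fun _ _ => by positivity) hZ
    _ = (1 + r) / (1 - r) := by field_simp

noncomputable def freq (n : ℕ) : ℝ := 16 ^ (n + 2)

noncomputable def gram (m n : ℕ) : ℝ := freq m * freq n / (freq m + freq n) ^ 2

noncomputable def quadForm (s : Finset ℕ) (d : ℕ → ℝ) : ℝ :=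
  ∑ m ∈ s, ∑ n ∈ s, gram m n * d m * d n

lemma freq_pos (n : ℕ) : 0 < freq n := by unfold freq; positivity

lemma gram_nonneg (m n : ℕ) : 0 ≤ gram m n := by
  have := freq_pos m; have := freq_pos n
  unfold gram; positivity

lemma gram_comm (m n : ℕ) : gram m n = gram n m := by
  rw [gram, gram, mul_comm, add_comm]

lemma gram_self (n : ℕ) : gram n n = 1 / 4 := by
  have := freq_pos n
  rw [gram]; field_simp; ring

lemma mul_div_add_sq_le_div {a b : ℝ} (ha : 0 ≤ a) (hb : 0 < b) :
    a * b / (a + b) ^ 2 ≤ a / b := by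
  rw [div_le_div_iff₀ (by positivity) hb]
  nlinarith [mul_nonneg (sq_nonneg a) (by positivity : 0 ≤ a + 2 * b)]

lemma gram_le_of_le {m n : ℕ} (h : m ≤ n) : gram m n ≤ (1 / 16) ^ (n - m) := by
  have hfreq : freq m / freq n = (1 / 16) ^ (n - m) := by
    have : freq n = freq m * 16 ^ (n - m) := by rw [freq, freq, ← pow_add]; congr 1; omega
    rw [this, div_mul_cancel_left₀ (freq_pos m).ne', one_div_pow, one_div]
  exact hfreq ▸ mul_div_add_sq_le_div (freq_pos m).le (freq_pos n)

lemma gram_le_pow_dist (m n : ℕ) : gram m n ≤ (1 / 16) ^ Nat.dist m n := by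
  rcases le_total m n with h | h
  · rw [Nat.dist_eq_sub_of_le h]; exact gram_le_of_le h
  · rw [gram_comm, Nat.dist_comm, Nat.dist_eq_sub_of_le h]; exact gram_le_of_le h

lemma sum_offDiag_gram_le (m : ℕ) (s : Finset ℕ) :
    ∑ n ∈ s, (if m = n then 0 else gram m n) ≤ 2 / 15 := by
  have hle : ∀ n, (if m = n then 0 else gram m n) ≤
      (1 / 16 : ℝ) ^ Nat.dist m n - if m = n then 1 else 0 := by
    intro n
    split_ifs with h
    · simp [h]
    · simpa using gram_le_pow_dist m n
  calc ∑ n ∈ s, (if m = n then 0 else gram m n)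
      ≤ ∑ n ∈ insert m s, (if m = n then 0 else gram m n) :=
        Finset.sum_le_sum_of_subset_of_nonneg (Finset.subset_insert m s)
          fun n _ _ => by split_ifs <;> simp [gram_nonneg]
    _ ≤ ∑ n ∈ insert m s, ((1 / 16 : ℝ) ^ Nat.dist m n - if m = n then 1 else 0) :=
        Finset.sum_le_sum fun n _ => hle n
    _ ≤ 2 / 15 := by
        rw [Finset.sum_sub_distrib, Finset.sum_ite_eq, if_pos (Finset.mem_insert_self m s)]
        linarith [sum_pow_dist_le (r := 1 / 16) (by norm_num) (by norm_num) m (insert m s)]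

lemma abs_quadForm_sub_le (s : Finset ℕ) (d : ℕ → ℝ) :
    |quadForm s d - 1 / 4 * ∑ n ∈ s, d n ^ 2| ≤ 2 / 15 * ∑ n ∈ s, d n ^ 2 := by
  have hterm : ∀ m n, (if m = n then 0 else gram m n) * d m * d n =
      gram m n * d m * d n - if m = n then 1 / 4 * d m ^ 2 else 0 := by
    intro m n
    split_ifs with h
    · rw [h, gram_self]; ring
    · ring
  have hsplit : ∑ m ∈ s, ∑ n ∈ s, (if m = n then 0 else gram m n) * d m * d n =
      quadForm s d - 1 / 4 * ∑ n ∈ s, d n ^ 2 := by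
    simp_rw [quadForm, hterm, Finset.sum_sub_distrib, Finset.sum_ite_eq, Finset.mul_sum]
    exact congrArg _ (Finset.sum_congr rfl fun m hm => if_pos hm)
  rw [← hsplit]
  refine abs_sum_sum_mul_le s (fun m n => ?_) (fun m n => ?_) (fun m _ => sum_offDiag_gram_le m s) d
  · split_ifs <;> simp [gram_nonneg]
  · by_cases h : m = n
    · simp [h]
    · rw [if_neg h, if_neg (Ne.symm h), gram_comm]

/-- `G^T(f)(ω)²` in terms of the martingale differences `d n = dE_{n+2}(f)(ω)`. -/
noncomputable def gSq (d : ℕ → ℝ) : ℝ≥0∞ :=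
  ∫⁻ t in Ioi (0 : ℝ), ENNReal.ofReal (t * (∑' n, expKernel (freq n) t * d n) ^ 2)

lemma lintegral_mul_sq_sum_range (d : ℕ → ℝ) (M : ℕ) :
    ∫⁻ t in Ioi (0 : ℝ),
        ENNReal.ofReal (t * (∑ n ∈ Finset.range M, expKernel (freq n) t * d n) ^ 2) =
      ENNReal.ofReal (quadForm (Finset.range M) d) :=
  lintegral_mul_sq_sum_expKernel freq_pos _ d

theorem gSq_le (d : ℕ → ℝ) :
    gSq d ≤ ENNReal.ofReal (23 / 60) * ∑' n, ENNReal.ofReal (d n ^ 2) := by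
  have hfatou : ∀ t, ENNReal.ofReal (t * (∑' n, expKernel (freq n) t * d n) ^ 2) ≤
      liminf (fun M =>
        ENNReal.ofReal (t * (∑ n ∈ Finset.range M, expKernel (freq n) t * d n) ^ 2)) atTop := by
    intro t
    by_cases hx : Summable fun n => expKernel (freq n) t * d n
    · exact ((ENNReal.continuous_ofReal.tendsto _).comp
        ((hx.hasSum.tendsto_sum_nat.pow 2).const_mul t)).liminf_eq.ge
    · simp [tsum_eq_zero_of_not_summable hx]
  calc gSq d
      ≤ ∫⁻ t in Ioi (0 : ℝ), liminf (fun M =>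
          ENNReal.ofReal (t * (∑ n ∈ Finset.range M, expKernel (freq n) t * d n) ^ 2)) atTop :=
        lintegral_mono hfatou
    _ ≤ liminf (fun M => ENNReal.ofReal (quadForm (Finset.range M) d))
          atTop := by
        simp_rw [← lintegral_mul_sq_sum_range]
        exact lintegral_liminf_le fun M => by unfold expKernel; fun_prop
    _ ≤ ENNReal.ofReal (23 / 60) * ∑' n, ENNReal.ofReal (d n ^ 2) := by
        refine liminf_le_of_frequently_le' (Frequently.of_forall fun M => ?_)
        have hQ := (abs_le.mp (abs_quadForm_sub_le (Finset.range M) d)).2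
        calc ENNReal.ofReal (quadForm (Finset.range M) d)
            ≤ ENNReal.ofReal (23 / 60) * ENNReal.ofReal (∑ n ∈ Finset.range M, d n ^ 2) := by
              rw [← ENNReal.ofReal_mul (by norm_num)]
              exact ENNReal.ofReal_le_ofReal (by linarith)
          _ ≤ ENNReal.ofReal (23 / 60) * ∑' n, ENNReal.ofReal (d n ^ 2) := by
              rw [ENNReal.ofReal_sum_of_nonneg fun n _ => sq_nonneg _]
              gcongr
              exact ENNReal.sum_le_tsum _

lemma expKernel_le {a t : ℝ} (ha : 0 < a) (ht : 0 < t) : expKernel a t ≤ 2 / (a * t ^ 2) := by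
  have hexp : (a * t) ^ 2 / 2 ≤ Real.exp (a * t) := by
    simpa using Real.pow_div_factorial_le_exp _ (by positivity : 0 ≤ a * t) 2
  rw [expKernel, Real.exp_neg, ← div_eq_mul_inv,
    div_le_div_iff₀ (Real.exp_pos _) (by positivity)]
  nlinarith

lemma one_div_freq_le (n : ℕ) : 1 / freq n ≤ (1 / 16) ^ n := by
  rw [freq, one_div_pow]
  exact one_div_le_one_div_of_le (by positivity) (pow_le_pow_right₀ (by norm_num) (by omega))

lemma summable_expKernel_freq {t : ℝ} (ht : 0 < t) : Summable fun n => expKernel (freq n) t := by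
  refine Summable.of_nonneg_of_le (fun n => expKernel_nonneg (freq_pos n).le t) (fun n => ?_)
    ((summable_geometric_of_lt_one (by norm_num : (0 : ℝ) ≤ 1 / 16) (by norm_num)).mul_left
      (2 / t ^ 2))
  calc expKernel (freq n) t ≤ 2 / (freq n * t ^ 2) := expKernel_le (freq_pos n) ht
    _ = 2 / t ^ 2 * (1 / freq n) := by field_simp
    _ ≤ 2 / t ^ 2 * (1 / 16) ^ n := by gcongr; exact one_div_freq_le n

lemma ofReal_mul_sq_le (u v : ℝ) {t : ℝ} (ht : 0 ≤ t) :
    ENNReal.ofReal (t * u ^ 2) ≤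
      ENNReal.ofReal (t * (u + v) ^ 2) + 2 * (ENNReal.ofReal t * ‖u‖ₑ * ‖v‖ₑ) := by
  have h : t * u ^ 2 ≤ t * (u + v) ^ 2 + 2 * (t * |u| * |v|) := by
    have := neg_abs_le (u * v)
    rw [abs_mul] at this
    nlinarith [mul_nonneg ht (sq_nonneg v), mul_le_mul_of_nonneg_left this ht]
  calc ENNReal.ofReal (t * u ^ 2)
      ≤ ENNReal.ofReal (t * (u + v) ^ 2) + ENNReal.ofReal (2 * (t * |u| * |v|)) :=
        (ENNReal.ofReal_le_ofReal h).trans ENNReal.ofReal_add_le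
    _ = _ := by
        congr 1
        rw [ENNReal.ofReal_mul zero_le_two, ENNReal.ofReal_mul (by positivity),
          ENNReal.ofReal_mul ht, ENNReal.ofReal_ofNat, Real.enorm_eq_ofReal_abs,
          Real.enorm_eq_ofReal_abs]

lemma enorm_expKernel_mul_le {a t c y : ℝ} (ha : 0 ≤ a) (hy : |y| ≤ c) :
    ‖expKernel a t * y‖ₑ ≤ ENNReal.ofReal c * ENNReal.ofReal (expKernel a t) := by
  rw [Real.enorm_eq_ofReal_abs, abs_mul, abs_of_nonneg (expKernel_nonneg ha t),
    ← ENNReal.ofReal_mul ((abs_nonneg y).trans hy), mul_comm c]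
  exact ENNReal.ofReal_le_ofReal (mul_le_mul_of_nonneg_left hy (expKernel_nonneg ha t))

lemma tsum_tsum_gram_add_le (M : ℕ) :
    ∑' i : Fin M, ∑' k, ENNReal.ofReal (gram i (k + M)) ≤ ENNReal.ofReal 2 := by
  have hrow : ∀ i : Fin M, ∑' k, ENNReal.ofReal (gram i (k + M)) ≤
      ENNReal.ofReal ((1 / 16) ^ Nat.dist M i * (16 / 15)) := by
    intro i
    have hgeom := hasSum_geometric_of_lt_one (by norm_num : (0 : ℝ) ≤ 1 / 16) (by norm_num)
    calc ∑' k, ENNReal.ofReal (gram i (k + M))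
        ≤ ∑' k, ENNReal.ofReal ((1 / 16) ^ Nat.dist M i * (1 / 16) ^ k) := by
          refine ENNReal.tsum_le_tsum fun k => ENNReal.ofReal_le_ofReal ?_
          rw [Nat.dist_comm, Nat.dist_eq_sub_of_le i.is_lt.le, ← pow_add]
          convert gram_le_of_le (show (i : ℕ) ≤ k + M by omega) using 2
          omega
      _ = ENNReal.ofReal ((1 / 16) ^ Nat.dist M i * (16 / 15)) := by
          rw [← ENNReal.ofReal_tsum_of_nonneg (fun k => by positivity)
            (hgeom.summable.mul_left _), tsum_mul_left, hgeom.tsum_eq]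
          norm_num
  calc ∑' i : Fin M, ∑' k, ENNReal.ofReal (gram i (k + M))
      ≤ ∑ i : Fin M, ENNReal.ofReal ((1 / 16) ^ Nat.dist M i * (16 / 15)) := by
        rw [tsum_fintype]; exact Finset.sum_le_sum fun i _ => hrow i
    _ = ENNReal.ofReal ((∑ i ∈ Finset.range M, (1 / 16 : ℝ) ^ Nat.dist M i) * (16 / 15)) := by
        rw [← ENNReal.ofReal_sum_of_nonneg fun i _ => by positivity, Finset.sum_mul,
          Fin.sum_univ_eq_sum_range (fun i => (1 / 16 : ℝ) ^ Nat.dist M i * (16 / 15))]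
    _ ≤ ENNReal.ofReal 2 := by
        refine ENNReal.ofReal_le_ofReal ?_
        have := sum_pow_dist_le (r := 1 / 16) (by norm_num) (by norm_num) M (Finset.range M)
        nlinarith

lemma lintegral_cross_le {D ε : ℝ} (hD : 0 ≤ D) (hε : 0 ≤ ε) (M : ℕ) :
    ∫⁻ t in Ioi (0 : ℝ), ENNReal.ofReal t *
        (∑' i : Fin M, ENNReal.ofReal D * ENNReal.ofReal (expKernel (freq i) t)) *
        (∑' k, ENNReal.ofReal ε * ENNReal.ofReal (expKernel (freq (k + M)) t)) ≤
      ENNReal.ofReal (2 * D * ε) :=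
  calc _ = ENNReal.ofReal D * ENNReal.ofReal ε *
          ∑' i : Fin M, ∑' k, ENNReal.ofReal (gram i (k + M)) := by
        rw [lintegral_mul_tsum_mul_tsum (fun i : Fin M => freq_pos i) (fun k => freq_pos (k + M))]
        simp_rw [← ENNReal.tsum_mul_left]
        rfl
    _ ≤ ENNReal.ofReal D * ENNReal.ofReal ε * ENNReal.ofReal 2 := by
        gcongr; exact tsum_tsum_gram_add_le M
    _ = ENNReal.ofReal (2 * D * ε) := by
        rw [← ENNReal.ofReal_mul hD, ← ENNReal.ofReal_mul (mul_nonneg hD hε)]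
        ring_nf

lemma ofReal_mul_sq_sum_range_le {d : ℕ → ℝ} {D ε : ℝ} (hD : ∀ n, |d n| ≤ D) {M : ℕ}
    (hε : ∀ n, M ≤ n → |d n| ≤ ε) {t : ℝ} (ht : 0 < t) :
    ENNReal.ofReal (t * (∑ n ∈ Finset.range M, expKernel (freq n) t * d n) ^ 2) ≤
      ENNReal.ofReal (t * (∑' n, expKernel (freq n) t * d n) ^ 2) +
        2 * (ENNReal.ofReal t *
          (∑' i : Fin M, ENNReal.ofReal D * ENNReal.ofReal (expKernel (freq i) t)) *
          (∑' k, ENNReal.ofReal ε * ENNReal.ofReal (expKernel (freq (k + M)) t))) := by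
  have hx : Summable fun n => expKernel (freq n) t * d n := by
    refine ((summable_expKernel_freq ht).mul_left D).of_norm_bounded fun n => ?_
    rw [Real.norm_eq_abs, abs_mul, abs_of_nonneg (expKernel_nonneg (freq_pos n).le t), mul_comm]
    exact mul_le_mul_of_nonneg_right (hD n) (expKernel_nonneg (freq_pos n).le t)
  rw [← hx.sum_add_tsum_nat_add M]
  refine (ofReal_mul_sq_le _ _ ht.le).trans (add_le_add_right ?_ _)
  gcongr
  · calc ‖∑ n ∈ Finset.range M, expKernel (freq n) t * d n‖ₑ
        ≤ ∑ n ∈ Finset.range M, ‖expKernel (freq n) t * d n‖ₑ := enorm_sum_le _ _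
      _ ≤ ∑ n ∈ Finset.range M, ENNReal.ofReal D * ENNReal.ofReal (expKernel (freq n) t) :=
        Finset.sum_le_sum fun n _ => enorm_expKernel_mul_le (freq_pos n).le (hD n)
      _ = _ := by
        rw [tsum_fintype]
        exact (Fin.sum_univ_eq_sum_range
          (fun n => ENNReal.ofReal D * ENNReal.ofReal (expKernel (freq n) t)) M).symm
  · exact enorm_tsum_le_tsum_enorm.trans (ENNReal.tsum_le_tsum fun k =>
      enorm_expKernel_mul_le (freq_pos _).le (hε _ (by omega)))

lemma ofReal_mul_sum_sq_le_gSq_add {d : ℕ → ℝ} {D ε : ℝ} (hD : ∀ n, |d n| ≤ D)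
    {M : ℕ} (hε : ∀ n, M ≤ n → |d n| ≤ ε) :
    ENNReal.ofReal (7 / 60 * ∑ n ∈ Finset.range M, d n ^ 2) ≤
      gSq d + ENNReal.ofReal (4 * D * ε) := by
  set cross : ℝ → ℝ≥0∞ := fun t => ENNReal.ofReal t *
    (∑' i : Fin M, ENNReal.ofReal D * ENNReal.ofReal (expKernel (freq i) t)) *
    (∑' k, ENNReal.ofReal ε * ENNReal.ofReal (expKernel (freq (k + M)) t))
  have hmeas : Measurable cross := by
    unfold cross expKernel
    refine (measurable_id.ennreal_ofReal.mul (Measurable.tsum fun i => ?_)).mul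
      (Measurable.tsum fun k => ?_) <;> fun_prop
  have hcross := lintegral_cross_le ((abs_nonneg _).trans (hD 0))
    ((abs_nonneg _).trans (hε M le_rfl)) M
  calc ENNReal.ofReal (7 / 60 * ∑ n ∈ Finset.range M, d n ^ 2)
      ≤ ENNReal.ofReal (quadForm (Finset.range M) d) :=
        ENNReal.ofReal_le_ofReal
          (by linarith [(abs_le.mp (abs_quadForm_sub_le (Finset.range M) d)).1])
    _ ≤ ∫⁻ t in Ioi (0 : ℝ),
          (ENNReal.ofReal (t * (∑' n, expKernel (freq n) t * d n) ^ 2) + 2 * cross t) := by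
        rw [← lintegral_mul_sq_sum_range]
        exact setLIntegral_mono' measurableSet_Ioi fun t ht => ofReal_mul_sq_sum_range_le hD hε ht
    _ = gSq d + 2 * ∫⁻ t in Ioi (0 : ℝ), cross t := by
        rw [lintegral_add_right _ (hmeas.const_mul 2), lintegral_const_mul _ hmeas, gSq]
    _ ≤ gSq d + 2 * ENNReal.ofReal (2 * D * ε) := by gcongr
    _ = gSq d + ENNReal.ofReal (4 * D * ε) := by
        rw [← ENNReal.ofReal_ofNat 2, ← ENNReal.ofReal_mul zero_le_two]
        ring_nf

theorem le_gSq {d : ℕ → ℝ} (hd : Tendsto d atTop (𝓝 0)) :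
    ENNReal.ofReal (7 / 60) * ∑' n, ENNReal.ofReal (d n ^ 2) ≤ gSq d := by
  obtain ⟨D, hD⟩ : ∃ D, ∀ n, |d n| ≤ D := by
    have habs : Tendsto (fun n => |d n|) atTop (𝓝 0) := by simpa using hd.abs
    obtain ⟨D, hD⟩ := habs.bddAbove_range
    exact ⟨D, fun n => hD ⟨n, rfl⟩⟩
  refine ENNReal.le_of_forall_pos_le_add fun δ hδ _ => ?_
  obtain ⟨ε, hε, hεδ⟩ := exists_pos_mul_lt (NNReal.coe_pos.mpr hδ) (4 * D)
  obtain ⟨M, hM⟩ := Metric.tendsto_atTop.mp hd ε hε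
  have htail : ∀ n, M ≤ n → |d n| ≤ ε := fun n hn => by
    simpa [Real.dist_eq] using (hM n hn).le
  rw [ENNReal.tsum_eq_iSup_nat, ENNReal.mul_iSup]
  refine iSup_le fun N => ?_
  calc ENNReal.ofReal (7 / 60) * ∑ n ∈ Finset.range N, ENNReal.ofReal (d n ^ 2)
      ≤ ENNReal.ofReal (7 / 60 * ∑ n ∈ Finset.range (max N M), d n ^ 2) := by
        rw [ENNReal.ofReal_mul (by norm_num), ENNReal.ofReal_sum_of_nonneg fun n _ => sq_nonneg _]
        gcongr
        exact le_max_left N M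
    _ ≤ gSq d + ENNReal.ofReal (4 * D * ε) :=
        ofReal_mul_sum_sq_le_gSq_add hD fun n hn => htail n ((le_max_right N M).trans hn)
    _ ≤ gSq d + δ := by
        gcongr
        rw [← ENNReal.ofReal_coe_nnreal]
        exact ENNReal.ofReal_le_ofReal hεδ.le

end GFunction

open GFunction

lemma GT_eq_gSq {Ω : Type*} [m0 : MeasurableSpace Ω] (μ : Measure Ω)
    (F : ℕ → MeasurableSpace Ω) (f : Ω → ℝ) (ω : Ω) :
    GT μ F f ω = gSq (fun n => dE μ F f (n + 2) ω) ^ (1 / 2 : ℝ) := by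
  rw [GT, gSq]
  congr 1
  refine setLIntegral_congr_fun measurableSet_Ioi fun t (ht : 0 < t) => congrArg _ ?_
  have hsum : ∑' n, t * 16 ^ (n + 2) * Real.exp (-(16 ^ (n + 2) * t)) * dE μ F f (n + 2) ω =
      t * ∑' n, expKernel (freq n) t * dE μ F f (n + 2) ω := by
    rw [← tsum_mul_left]
    exact tsum_congr fun n => by rw [expKernel, freq]; ring
  rw [hsum]
  field_simp

lemma ae_tendsto_dE {Ω : Type*} [m0 : MeasurableSpace Ω] {μ : Measure Ω}
    [IsProbabilityMeasure μ] {F : ℕ → MeasurableSpace Ω} (hle : ∀ n, F n ≤ m0)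
    (hmono : Monotone F) {f : Ω → ℝ} (hf : Integrable f μ) :
    ∀ᵐ ω ∂μ, Tendsto (fun n => dE μ F f (n + 2) ω) atTop (𝓝 0) := by
  let ℱ : Filtration ℕ m0 :=
    { seq := fun n => F (n + 1)
      mono' := fun i j hij => hmono (by omega)
      le' := fun n => hle (n + 1) }
  have hbdd : ∀ n, eLpNorm (μ[f | ℱ n]) 1 μ ≤ (eLpNorm f 1 μ).toNNReal := fun n => by
    rw [ENNReal.coe_toNNReal (memLp_one_iff_integrable.mpr hf).2.ne]
    exact eLpNorm_condExp_le_eLpNorm f le_rfl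
  filter_upwards [Submartingale.ae_tendsto_limitProcess
    (martingale_condExp f ℱ μ).submartingale hbdd] with ω hω
  have hdiff := (hω.comp (tendsto_add_atTop_nat 1)).sub hω
  rw [sub_self] at hdiff
  refine hdiff.congr fun n => ?_
  simp [dE, condE, ℱ]

lemma lpNormE_mono_ae {Ω : Type*} [MeasurableSpace Ω] {μ : Measure Ω} {p : ℝ≥0∞}
    {g h : Ω → ℝ≥0∞} (hgh : g ≤ᵐ[μ] h) : lpNormE μ p g ≤ lpNormE μ p h := by
  rw [lpNormE, lpNormE]
  split_ifs
  · exact essSup_mono_ae hgh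
  · refine ENNReal.rpow_le_rpow (lintegral_mono_ae ?_) (by positivity)
    filter_upwards [hgh] with ω hω
    exact ENNReal.rpow_le_rpow hω ENNReal.toReal_nonneg

lemma lpNormE_const_mul {Ω : Type*} [MeasurableSpace Ω] {μ : Measure Ω} {p : ℝ≥0∞}
    (hp : p ≠ 0) {c : ℝ≥0∞} (hc : c ≠ ⊤) (h : Ω → ℝ≥0∞) :
    lpNormE μ p (fun ω => c * h ω) = c * lpNormE μ p h := by
  rw [lpNormE, lpNormE]
  split_ifs with hp_top
  · exact ENNReal.essSup_const_mul
  · have hq : 0 < p.toReal := ENNReal.toReal_pos hp hp_top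
    simp_rw [ENNReal.mul_rpow_of_nonneg _ _ hq.le]
    rw [lintegral_const_mul' _ _ (ENNReal.rpow_ne_top_of_nonneg hq.le hc),
      ENNReal.mul_rpow_of_nonneg _ _ (by positivity), ← ENNReal.rpow_mul, mul_one_div,
      div_self hq.ne', ENNReal.rpow_one]

lemma ofReal_sqrt_mul_rpow_half {c : ℝ} (hc : 0 ≤ c) (x : ℝ≥0∞) :
    ENNReal.ofReal √c * x ^ (1 / 2 : ℝ) = (ENNReal.ofReal c * x) ^ (1 / 2 : ℝ) := by
  rw [ENNReal.mul_rpow_of_nonneg _ _ (by norm_num), Real.sqrt_eq_rpow,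
    ENNReal.ofReal_rpow_of_nonneg hc (by norm_num)]

theorem stmt11_general {Ω : Type*} [m0 : MeasurableSpace Ω] (μ : Measure Ω) [IsProbabilityMeasure μ]
    (F : ℕ → MeasurableSpace Ω) (hle : ∀ n, F n ≤ m0) (hmono : Monotone F)
    (p : ℝ≥0∞) (hp : 1 ≤ p) (f : Ω → ℝ) (hf1 : Integrable f μ) :
    ENNReal.ofReal (Real.sqrt (7 / 60)) * lpNormE μ p (Ssq μ F f) ≤
        lpNormE μ p (GT μ F f) ∧
      lpNormE μ p (GT μ F f) ≤
        ENNReal.ofReal (Real.sqrt (23 / 60)) * lpNormE μ p (Ssq μ F f) := by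
  have hp0 : p ≠ 0 := (zero_lt_one.trans_le hp).ne'
  have hlower : ∀ᵐ ω ∂μ, ENNReal.ofReal √(7 / 60) * Ssq μ F f ω ≤ GT μ F f ω := by
    filter_upwards [ae_tendsto_dE hle hmono hf1] with ω hω
    rw [GT_eq_gSq, Ssq, ofReal_sqrt_mul_rpow_half (by norm_num)]
    exact ENNReal.rpow_le_rpow (le_gSq hω) (by norm_num)
  have hupper : ∀ ω, GT μ F f ω ≤ ENNReal.ofReal √(23 / 60) * Ssq μ F f ω := fun ω => by
    rw [GT_eq_gSq, Ssq, ofReal_sqrt_mul_rpow_half (by norm_num)]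
    exact ENNReal.rpow_le_rpow (gSq_le _) (by norm_num)
  constructor
  · rw [← lpNormE_const_mul hp0 ENNReal.ofReal_ne_top]
    exact lpNormE_mono_ae hlower
  · rw [← lpNormE_const_mul hp0 ENNReal.ofReal_ne_top]
    exact lpNormE_mono_ae (ae_of_all _ hupper)

/-- For the semigroup built from `a_n = 1 - e^{-16^{n+1}}`, `1 ≤ p ≤ ∞` and `f ∈ L_p(Ω)`:
`√(7/60) ‖S(f - E_1 f)‖_p ≤ ‖G^T(f)‖_p ≤ √(23/60) ‖S(f - E_1 f)‖_p`. -/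
theorem stmt11 {Ω : Type*} [m0 : MeasurableSpace Ω] (μ : Measure Ω) [IsProbabilityMeasure μ]
    (F : ℕ → MeasurableSpace Ω) (hle : ∀ n, F n ≤ m0) (hmono : Monotone F)
    (p : ℝ≥0∞) (hp : 1 ≤ p) (f : Ω → ℝ) (hf : MemLp f p μ) (hf1 : Integrable f μ) :
    ENNReal.ofReal (Real.sqrt (7 / 60)) * lpNormE μ p (Ssq μ F f) ≤
        lpNormE μ p (GT μ F f) ∧
      lpNormE μ p (GT μ F f) ≤
        ENNReal.ofReal (Real.sqrt (23 / 60)) * lpNormE μ p (Ssq μ F f) :=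
  stmt11_general (m0 := m0) μ F hle hmono p hp f hf1
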